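/- Let H be a compact Hausdorff topological group with normalized Haar probability measure μ, and let G be a dense subgroup of H (with the subspace topology). Then G has property (T) if and only if there exist a compact subset K ⊆ G and ε > 0 such that for every function f : H → ℂ of positive type with ∫_H f dμ = 0, one has sup_{x ∈ K} |f(x) − 1| ≥ ε. -/

import Mathlib

open scoped ComplexInnerProductSpace

/-- The action of a unitary matrix on Euclidean space. -/
noncomputable def matAct {n : ℕ} (A : Matrix.unitaryGroup (Fin n) ℂ)
    (v : EuclideanSpace ℂ (Fin n)) : EuclideanSpace ℂ (Fin n) :=
  Matrix.toEuclideanLin (A : Matrix (Fin n) (Fin n) ℂ) v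

/-- The coefficient function `g ↦ ⟪ρ(g)v, v⟫` of a finite-dimensional unitary
representation. -/
noncomputable def coeffFn {G : Type*} [Group G] {n : ℕ}
    (ρ : G →* Matrix.unitaryGroup (Fin n) ℂ) (v : EuclideanSpace ℂ (Fin n)) (g : G) : ℂ :=
  ⟪matAct (ρ g) v, v⟫

/-- `P_ρ`: the set of all finite sums of coefficient functions of `ρ`. -/
def posTypeFns {G : Type*} [Group G] {n : ℕ}
    (ρ : G →* Matrix.unitaryGroup (Fin n) ℂ) : Set (G → ℂ) :=
  {f | ∃ (k : ℕ) (v : Fin k → EuclideanSpace ℂ (Fin n)),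
    f = fun g => ∑ i, coeffFn ρ (v i) g}

/-- A finite-dimensional unitary representation is irreducible if the only invariant
subspaces are `⊥` and `⊤`. -/
def IsIrreducibleRep {G : Type*} [Group G] {n : ℕ}
    (ρ : G →* Matrix.unitaryGroup (Fin n) ℂ) : Prop :=
  ∀ W : Submodule ℂ (EuclideanSpace ℂ (Fin n)),
    (∀ g : G, ∀ w ∈ W, matAct (ρ g) w ∈ W) → W = ⊥ ∨ W = ⊤

/-- Equivalence of finite-dimensional unitary representations, witnessed by a linear
isometric isomorphism intertwining them. -/
def RepEquiv {G : Type*} [Group G] {n m : ℕ}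
    (ρ : G →* Matrix.unitaryGroup (Fin n) ℂ) (σ : G →* Matrix.unitaryGroup (Fin m) ℂ) : Prop :=
  ∃ M : EuclideanSpace ℂ (Fin n) ≃ₗᵢ[ℂ] EuclideanSpace ℂ (Fin m),
    ∀ (g : G) (v : EuclideanSpace ℂ (Fin n)), M (matAct (ρ g) v) = matAct (σ g) (M v)

/-- The normalized character `g ↦ trace ρ(g) / n` of a representation `ρ : G → U(n)`. -/
noncomputable def normChar {G : Type*} [Group G] {n : ℕ}
    (ρ : G →* Matrix.unitaryGroup (Fin n) ℂ) (g : G) : ℂ :=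
  (ρ g : Matrix (Fin n) (Fin n) ℂ).trace / n

universe uG uE

/-- A (strongly continuous) unitary representation of a topological group on a complex
Hilbert space. -/
structure UnitaryRep (G : Type uG) [Group G] [TopologicalSpace G] where
  E : Type uE
  [ngroup : NormedAddCommGroup E]
  [ips : InnerProductSpace ℂ E]
  [complete : CompleteSpace E]
  π : G →* (E ≃ₗᵢ[ℂ] E)
  cont : ∀ v : E, Continuous fun g : G => π g v

attribute [instance] UnitaryRep.ngroup UnitaryRep.ips UnitaryRep.complete

/-- Kazhdan's property (T): there are a compact set `Q ⊆ G` and `ε > 0` such that every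
unitary representation of `G` possessing a `(Q,ε)`-invariant unit vector has a nonzero
invariant vector. -/
def HasPropertyT (G : Type uG) [Group G] [TopologicalSpace G] : Prop :=
  ∃ (Q : Set G) (ε : ℝ), IsCompact Q ∧ 0 < ε ∧
    ∀ ρ : UnitaryRep.{uG, uE} G,
      (∃ v : ρ.E, ‖v‖ = 1 ∧ ∀ g ∈ Q, ‖ρ.π g v - v‖ < ε) →
      ∃ v : ρ.E, v ≠ 0 ∧ ∀ g : G, ρ.π g v = v

/-- A function of positive type: a diagonal matrix coefficient `g ↦ ⟪π(g)v, v⟫` of some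
unitary representation. -/
def IsPositiveType {H : Type uG} [Group H] [TopologicalSpace H] (f : H → ℂ) : Prop :=
  ∃ (ρ : UnitaryRep.{uG, uE} H) (v : ρ.E), ∀ g : H, f g = ⟪ρ.π g v, v⟫

open MeasureTheory

/-!
If `G` has property (T) for `(Q, ε₀)` and `f = ⟪π(·)v, v⟫` has zero Haar integral, then `v` is
orthogonal to the `H`-invariant vectors, and so is its whole cyclic subrepresentation, which
therefore has no nonzero invariant vector. If `f` were close to `1` on `Q ∪ {1}`, the identity
`‖π(g)v - v‖² = 2 Re (f(1) - f(g))` would make `v` almost invariant under `Q`, and property (T)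
would give a nonzero `G`-invariant vector there, `H`-invariant by density.

Conversely, orbit maps of a representation of `G` are uniformly continuous for the unique
uniformity of the compact group `H`, so the representation extends to `H`. The Haar average of
a `(Q, ε)`-invariant unit vector `v` is `H`-invariant; if it vanished, `⟪π(·)v, v⟫` would have
zero integral while staying `ε`-close to `1` on `K`.

Cyclic representations of a compact group are separable, hence can be transported to any
universe; this is how the representations quantified over in `HasPropertyT` and in
`IsPositiveType`, which live in independent universes, are matched.
-/

open scoped ComplexInnerProductSpace
open MeasureTheory Filter Topology TopologicalSpace

universe uH uF

theorem small_of_separableSpace (X : Type uF) [MetricSpace X] [SeparableSpace X] :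
    Small.{uE} X := by
  obtain ⟨D, hD, hDd⟩ := exists_countable_dense X
  have := hD.to_subtype
  refine small_of_injective (f := fun x (d : D) => dist x d) fun x y hxy => ?_
  have h := Continuous.ext_on hDd (continuous_const.dist continuous_id)
    (continuous_const.dist continuous_id) fun d hd => congrFun hxy ⟨d, hd⟩
  simpa [eq_comm] using congrFun h x

theorem exists_linearIsometryEquiv_of_small (E : Type uF) [NormedAddCommGroup E]
    [InnerProductSpace ℂ E] [Small.{uE} E] :
    ∃ (F : Type uE) (_ : NormedAddCommGroup F) (_ : InnerProductSpace ℂ F),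
      Nonempty (F ≃ₗᵢ[ℂ] E) := by
  -- Forget that `F` is `Shrink E`: its normed structure would clash with the induced one.
  obtain ⟨F, ⟨e⟩⟩ : ∃ F : Type uE, Nonempty (F ≃ E) := ⟨Shrink E, ⟨(equivShrink E).symm⟩⟩
  let _ := e.addCommGroup
  let _ := e.module ℂ
  let l : F ≃ₗ[ℂ] E := e.linearEquiv ℂ
  let _ := NormedAddCommGroup.induced F E l l.injective
  exact ⟨F, _, InnerProductSpace.induced l, ⟨⟨l, fun _ => rfl⟩⟩⟩

theorem norm_inner_sub_one_le {E : Type uE} [NormedAddCommGroup E] [InnerProductSpace ℂ E]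
    (u : E) {v : E} (hv : ‖v‖ = 1) : ‖⟪u, v⟫ - 1‖ ≤ ‖u - v‖ := by
  have hvv : ⟪v, v⟫ = (1 : ℂ) := by simp [hv]
  calc ‖⟪u, v⟫ - 1‖ = ‖⟪u - v, v⟫‖ := by rw [inner_sub_left, hvv]
    _ ≤ ‖u - v‖ * ‖v‖ := norm_inner_le_norm _ _
    _ = ‖u - v‖ := by rw [hv, mul_one]

theorem norm_sub_sq_lt_of_inner_near_one {E : Type uE} [NormedAddCommGroup E]
    [InnerProductSpace ℂ E] (U : E ≃ₗᵢ[ℂ] E) {v : E} {ε : ℝ} (hε : ε ≤ 1 / 2)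
    (hv : ‖⟪v, v⟫ - 1‖ < ε) (hUv : ‖⟪U v, v⟫ - 1‖ < ε) : ‖U v - v‖ ^ 2 < 8 * ε * ‖v‖ ^ 2 := by
  have hnorm : ‖v‖ ^ 2 = (⟪v, v⟫ - 1).re + 1 := by
    rw [← inner_self_eq_norm_sq (𝕜 := ℂ)]; simp
  have hdist : ‖U v - v‖ ^ 2 = 2 * ((⟪v, v⟫ - 1).re - (⟪U v, v⟫ - 1).re) := by
    rw [norm_sub_sq (𝕜 := ℂ), U.norm_map, hnorm]; simp; ring
  have h₁ := Complex.abs_re_le_norm (⟪v, v⟫ - 1)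
  have h₂ := Complex.abs_re_le_norm (⟪U v, v⟫ - 1)
  have hε₀ : 0 ≤ ε := (norm_nonneg _).trans hv.le
  rw [hdist, hnorm]
  nlinarith [abs_le.1 h₁, abs_le.1 h₂]

namespace UnitaryRep

section Basic

variable {G : Type uG} [Group G] [TopologicalSpace G] (ρ : UnitaryRep.{uG, uE} G)

theorem π_mul_apply (x y : G) (v : ρ.E) : ρ.π (x * y) v = ρ.π x (ρ.π y v) := by
  rw [map_mul]; rfl

theorem π_one_apply (v : ρ.E) : ρ.π 1 v = v := by
  rw [map_one]; rfl

theorem inner_π_right_of_invariant {u : ρ.E} (hu : ∀ x, ρ.π x u = u) (x : G) (w : ρ.E) :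
    ⟪u, ρ.π x w⟫ = ⟪u, w⟫ := by
  conv_lhs => rw [← hu x]
  exact (ρ.π x).inner_map_map u w

abbrev restrict (K : Subgroup G) : UnitaryRep.{uG, uE} K where
  E := ρ.E
  π := ρ.π.comp K.subtype
  cont v := (ρ.cont v).comp continuous_subtype_val

theorem invariant_of_restrict_invariant {K : Subgroup G} (hK : Dense (K : Set G)) {v : ρ.E}
    (hv : ∀ g : K, (ρ.restrict K).π g v = v) (x : G) : ρ.π x v = v :=
  congrFun (Continuous.ext_on hK (ρ.cont v) continuous_const fun g hg => hv ⟨g, hg⟩) x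

theorem exists_unit_almost_invariant {Q : Set G} {ε : ℝ} {v : ρ.E} (hv : v ≠ 0)
    (h : ∀ g ∈ Q, ‖ρ.π g v - v‖ < ε * ‖v‖) :
    ∃ u : ρ.E, ‖u‖ = 1 ∧ ∀ g ∈ Q, ‖ρ.π g u - u‖ < ε := by
  refine ⟨(‖v‖⁻¹ : ℂ) • v, norm_smul_inv_norm hv, fun g hg => ?_⟩
  have hv' : 0 < ‖v‖ := norm_pos_iff.2 hv
  rw [map_smul, ← smul_sub, norm_smul, norm_inv, Complex.norm_real, norm_norm,
    inv_mul_lt_iff₀ hv', mul_comm]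
  exact h g hg

end Basic

section Average

variable {H : Type uH} [Group H] [TopologicalSpace H] [MeasurableSpace H]
  (μ : Measure H) (ρ : UnitaryRep.{uH, uF} H) (v : ρ.E)

noncomputable def average : ρ.E := ∫ x, ρ.π x v ∂μ

theorem π_average [IsTopologicalGroup H] [BorelSpace H] [μ.IsMulLeftInvariant] (x : H) :
    ρ.π x (ρ.average μ v) = ρ.average μ v := by
  calc ρ.π x (ρ.average μ v) = ∫ y, ρ.π x (ρ.π y v) ∂μ :=
        ((ρ.π x).toLinearIsometry.integral_comp_comm _).symm
    _ = ∫ y, ρ.π (x * y) v ∂μ := by simp_rw [π_mul_apply]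
    _ = ρ.average μ v := integral_mul_left_eq_self (fun y => ρ.π y v) x

theorem integrable_π_apply [CompactSpace H] [OpensMeasurableSpace H] [IsFiniteMeasure μ] :
    Integrable (fun x => ρ.π x v) μ :=
  (ρ.cont v).integrable_of_hasCompactSupport (isClosed_tsupport _).isCompact

theorem inner_average_of_invariant [CompactSpace H] [OpensMeasurableSpace H]
    [IsProbabilityMeasure μ] {u : ρ.E} (hu : ∀ x, ρ.π x u = u) :
    ⟪u, ρ.average μ v⟫ = ⟪u, v⟫ := by
  rw [average, ← integral_inner (ρ.integrable_π_apply μ v)]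
  simp [ρ.inner_π_right_of_invariant hu]

theorem integral_inner_π [CompactSpace H] [OpensMeasurableSpace H] [IsFiniteMeasure μ] :
    ∫ x, ⟪ρ.π x v, v⟫ ∂μ = ⟪ρ.average μ v, v⟫ := by
  calc ∫ x, ⟪ρ.π x v, v⟫ ∂μ = ∫ x, (starRingEnd ℂ) ⟪v, ρ.π x v⟫ ∂μ := by
        simp_rw [inner_conj_symm]
    _ = ⟪ρ.average μ v, v⟫ := by
        rw [integral_conj, integral_inner (ρ.integrable_π_apply μ v), inner_conj_symm, average]

theorem inner_eq_zero_of_integral_inner_π_eq_zero [IsTopologicalGroup H] [CompactSpace H]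
    [BorelSpace H] [μ.IsMulLeftInvariant] [IsProbabilityMeasure μ]
    (h : ∫ x, ⟪ρ.π x v, v⟫ ∂μ = 0) {u : ρ.E} (hu : ∀ x, ρ.π x u = u) : ⟪u, v⟫ = 0 := by
  have hP : ρ.average μ v = 0 := by
    rw [← inner_self_eq_zero (𝕜 := ℂ), inner_average_of_invariant μ ρ v (ρ.π_average μ v),
      ← integral_inner_π, h]
  rw [← inner_average_of_invariant μ ρ v hu, hP, inner_zero_right]

end Average

section Cyclic

variable {G : Type uG} [Group G] [TopologicalSpace G] (ρ : UnitaryRep.{uG, uE} G) (v : ρ.E)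

noncomputable def cyclicSpan : Submodule ℂ ρ.E :=
  (Submodule.span ℂ (Set.range fun x => ρ.π x v)).topologicalClosure

theorem π_apply_mem_cyclicSpan (x : G) : ρ.π x v ∈ ρ.cyclicSpan v :=
  Submodule.le_topologicalClosure _ (Submodule.subset_span ⟨x, rfl⟩)

theorem mem_cyclicSpan_self : v ∈ ρ.cyclicSpan v := by
  simpa only [π_one_apply] using ρ.π_apply_mem_cyclicSpan v 1

theorem isClosed_cyclicSpan : IsClosed (ρ.cyclicSpan v : Set ρ.E) :=
  Submodule.isClosed_topologicalClosure _

theorem π_mem_cyclicSpan (x : G) {w : ρ.E} (hw : w ∈ ρ.cyclicSpan v) :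
    ρ.π x w ∈ ρ.cyclicSpan v := by
  refine Submodule.topologicalClosure_minimal (t := (ρ.cyclicSpan v).comap (ρ.π x).toLinearMap)
    _ ?_ ((ρ.isClosed_cyclicSpan v).preimage (ρ.π x).continuous) hw
  rw [Submodule.span_le]
  rintro _ ⟨y, rfl⟩
  show ρ.π x (ρ.π y v) ∈ ρ.cyclicSpan v
  rw [← π_mul_apply]
  exact ρ.π_apply_mem_cyclicSpan v (x * y)

theorem eq_zero_of_mem_cyclicSpan {y : ρ.E} (hy : y ∈ ρ.cyclicSpan v)
    (h : ∀ x, ⟪y, ρ.π x v⟫ = 0) : y = 0 := by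
  have hle : ρ.cyclicSpan v ≤ (Submodule.span ℂ {y})ᗮ := by
    refine Submodule.topologicalClosure_minimal _ ?_ (Submodule.isClosed_orthogonal _)
    rw [Submodule.span_le]
    rintro _ ⟨x, rfl⟩
    exact Submodule.mem_orthogonal_singleton_iff_inner_right.2 (h x)
  exact inner_self_eq_zero.1 (Submodule.mem_orthogonal_singleton_iff_inner_right.1 (hle hy))

theorem separableSpace_cyclicSpan [CompactSpace G] : SeparableSpace (ρ.cyclicSpan v) := by
  have hspan := (isCompact_range (ρ.cont v)).isSeparable.span (R := ℂ)
  have hclosure := hspan.closure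
  rw [← Submodule.topologicalClosure_coe] at hclosure
  exact hclosure.separableSpace

end Cyclic

section Transport

variable {G : Type uG} [Group G] [TopologicalSpace G]

noncomputable abbrev subrep (ρ : UnitaryRep.{uG, uE} G) (S : Submodule ℂ ρ.E)
    (hS : ∀ x, ∀ v ∈ S, ρ.π x v ∈ S) (hSc : IsClosed (S : Set ρ.E)) : UnitaryRep.{uG, uE} G :=
  haveI := hSc.completeSpace_coe
  { E := S
    π := MonoidHom.mk'
      (fun x => LinearIsometryEquiv.ofSurjective
        ⟨(ρ.π x).toLinearMap.restrict (hS x), fun w => (ρ.π x).norm_map w⟩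
        fun w => ⟨⟨ρ.π x⁻¹ w, hS _ _ w.2⟩, Subtype.ext <| by
          change ρ.π x (ρ.π x⁻¹ w) = w
          rw [← π_mul_apply, mul_inv_cancel, π_one_apply]⟩)
      fun x y => LinearIsometryEquiv.ext fun w => Subtype.ext (ρ.π_mul_apply x y w)
    cont := fun w => (ρ.cont w).subtype_mk _ }

noncomputable abbrev ofEquiv (ρ : UnitaryRep.{uG, uF} G) {F : Type uE} [NormedAddCommGroup F]
    [InnerProductSpace ℂ F] (e : F ≃ₗᵢ[ℂ] ρ.E) : UnitaryRep.{uG, uE} G where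
  E := F
  complete := e.toIsometryEquiv.completeSpace
  π := MonoidHom.mk' (fun x => (e.trans (ρ.π x)).trans e.symm)
    fun x y => LinearIsometryEquiv.ext fun w => by simp
  cont w := e.symm.continuous.comp (ρ.cont (e w))

theorem ofEquiv_π_apply (ρ : UnitaryRep.{uG, uF} G) {F : Type uE} [NormedAddCommGroup F]
    [InnerProductSpace ℂ F] (e : F ≃ₗᵢ[ℂ] ρ.E) (x : G) (w : F) :
    e ((ρ.ofEquiv e).π x w) = ρ.π x (e w) :=
  e.apply_symm_apply _

theorem exists_cyclic_model [CompactSpace G] (ρ : UnitaryRep.{uG, uF} G) (v : ρ.E) :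
    ∃ (σ : UnitaryRep.{uG, uE} G) (w : σ.E), (∀ x, ⟪σ.π x w, w⟫ = ⟪ρ.π x v, v⟫) ∧
      ∀ y : σ.E, (∀ x, ⟪y, σ.π x w⟫ = 0) → y = 0 := by
  have := ρ.separableSpace_cyclicSpan v
  have : Small.{uE} (ρ.cyclicSpan v) := small_of_separableSpace _
  obtain ⟨F, _, _, ⟨e⟩⟩ : ∃ (F : Type uE) (_ : NormedAddCommGroup F) (_ : InnerProductSpace ℂ F),
      Nonempty (F ≃ₗᵢ[ℂ] ρ.cyclicSpan v) := exists_linearIsometryEquiv_of_small _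
  let σ₀ := ρ.subrep (ρ.cyclicSpan v) (ρ.π_mem_cyclicSpan v) (ρ.isClosed_cyclicSpan v)
  have he : ∀ x (y w : F), ⟪y, (σ₀.ofEquiv e).π x w⟫ = ⟪(e y : ρ.E), ρ.π x (e w)⟫ := by
    intro x y w
    rw [← e.inner_map_map]
    exact congrArg (⟪e y, ·⟫) (σ₀.ofEquiv_π_apply e x w)
  refine ⟨σ₀.ofEquiv e, e.symm ⟨v, ρ.mem_cyclicSpan_self v⟩, fun x => ?_, fun y hy => ?_⟩
  · rw [← inner_conj_symm, he, e.apply_symm_apply, inner_conj_symm]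
  · have hy' : (e y : ρ.E) = 0 :=
      ρ.eq_zero_of_mem_cyclicSpan v (e y).2 fun x => by
        simpa only [he, e.apply_symm_apply] using hy x
    simpa using hy'

end Transport

theorem uniformContinuous_π_apply {G : Type uG} [Group G] [UniformSpace G]
    [IsLeftUniformGroup G] (ρ : UnitaryRep.{uG, uE} G) (v : ρ.E) :
    UniformContinuous fun g => ρ.π g v := by
  rw [UniformContinuous, uniformity_eq_comap_inv_mul_nhds_one G,
    Metric.uniformity_eq_comap_nhds_zero, tendsto_comap_iff]
  have h : Tendsto (fun g => dist v (ρ.π g v)) (𝓝 1) (𝓝 0) := by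
    simpa [π_one_apply] using ((continuous_const (y := v)).dist (ρ.cont v)).tendsto 1
  refine (h.comp tendsto_comap).congr fun p => ?_
  change dist v (ρ.π (p.1⁻¹ * p.2) v) = dist (ρ.π p.1 v) (ρ.π p.2 v)
  rw [← (ρ.π p.1).dist_map, ← π_mul_apply, mul_inv_cancel_left]

section Extension

variable {H : Type uH} [Group H] [TopologicalSpace H] {G : Subgroup H} (hG : Dense (G : Set H))
  (ρ : UnitaryRep.{uH, uE} G)

noncomputable def extendAct (x : H) (v : ρ.E) : ρ.E :=
  hG.extend (fun g : G => ρ.π g v) x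

theorem extendAct_coe (g : G) (v : ρ.E) : extendAct hG ρ g v = ρ.π g v :=
  hG.extend_eq (ρ.cont v) g

theorem extendAct_one (v : ρ.E) : extendAct hG ρ 1 v = v := by
  simpa [π_one_apply] using extendAct_coe hG ρ 1 v

theorem continuous_extendAct [IsTopologicalGroup H] [CompactSpace H] (v : ρ.E) :
    Continuous (extendAct hG ρ · v) := by
  let _ : UniformSpace H := uniformSpaceOfCompactR1
  exact hG.continuous_extend fun x => uniformly_extend_exists (isUniformInducing_val _)
    hG.denseRange_val (ρ.uniformContinuous_π_apply v) x

variable [IsTopologicalGroup H] [CompactSpace H]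

theorem extendAct_add (x : H) (v w : ρ.E) :
    extendAct hG ρ x (v + w) = extendAct hG ρ x v + extendAct hG ρ x w :=
  congrFun (hG.denseRange_val.equalizer (continuous_extendAct hG ρ _)
    ((continuous_extendAct hG ρ v).add (continuous_extendAct hG ρ w))
    (funext fun g => by simp [extendAct_coe])) x

theorem extendAct_smul (x : H) (c : ℂ) (v : ρ.E) :
    extendAct hG ρ x (c • v) = c • extendAct hG ρ x v :=
  congrFun (hG.denseRange_val.equalizer (continuous_extendAct hG ρ _)
    ((continuous_extendAct hG ρ v).const_smul c)
    (funext fun g => by simp [extendAct_coe])) x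

theorem norm_extendAct (x : H) (v : ρ.E) : ‖extendAct hG ρ x v‖ = ‖v‖ :=
  congrFun (hG.denseRange_val.equalizer (continuous_extendAct hG ρ v).norm continuous_const
    (funext fun g => by simp [extendAct_coe])) x

noncomputable def extendIsometry (x : H) : ρ.E →ₗᵢ[ℂ] ρ.E where
  toFun := extendAct hG ρ x
  map_add' := extendAct_add hG ρ x
  map_smul' := extendAct_smul hG ρ x
  norm_map' := norm_extendAct hG ρ x

theorem extendAct_mul_coe (g : G) (x : H) (v : ρ.E) :
    extendAct hG ρ (x * g) v = extendAct hG ρ x (ρ.π g v) :=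
  congrFun (hG.denseRange_val.equalizer
    ((continuous_extendAct hG ρ v).comp (continuous_mul_const _))
    (continuous_extendAct hG ρ _)
    (funext fun h => by
      change extendAct hG ρ (h * g) v = extendAct hG ρ h (ρ.π g v)
      rw [← Subgroup.coe_mul, extendAct_coe, extendAct_coe, π_mul_apply])) x

theorem extendAct_mul (x y : H) (v : ρ.E) :
    extendAct hG ρ (x * y) v = extendAct hG ρ x (extendAct hG ρ y v) :=
  congrFun (hG.denseRange_val.equalizer
    ((continuous_extendAct hG ρ v).comp (continuous_const_mul x))
    ((extendIsometry hG ρ x).continuous.comp (continuous_extendAct hG ρ v))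
    (funext fun g => by simp [extendAct_mul_coe, extendAct_coe, extendIsometry])) y

noncomputable abbrev extendOfDense : UnitaryRep.{uH, uE} H where
  E := ρ.E
  π := MonoidHom.mk'
    (fun x => LinearIsometryEquiv.ofSurjective (extendIsometry hG ρ x) fun v =>
      ⟨extendAct hG ρ x⁻¹ v, by simp [extendIsometry, ← extendAct_mul, extendAct_one]⟩)
    fun x y => LinearIsometryEquiv.ext fun v => extendAct_mul hG ρ x y v
  cont := continuous_extendAct hG ρ

theorem extendOfDense_π_coe (g : G) (v : ρ.E) : (extendOfDense hG ρ).π g v = ρ.π g v :=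
  extendAct_coe hG ρ g v

end Extension

end UnitaryRep

section Criterion

open UnitaryRep

variable {H : Type uH} [Group H] [TopologicalSpace H] [IsTopologicalGroup H] [CompactSpace H]
  [MeasurableSpace H] [BorelSpace H] (μ : Measure H) [μ.IsMulLeftInvariant]
  [IsProbabilityMeasure μ] {G : Subgroup H}

theorem exists_far_from_one_of_hasPropertyT (hG : Dense (G : Set H))
    (hT : HasPropertyT.{uH, uE} G) :
    ∃ (K : Set H) (ε : ℝ), K ⊆ (G : Set H) ∧ IsCompact K ∧ 0 < ε ∧
      ∀ f : H → ℂ, IsPositiveType.{uH, uF} f → ∫ x, f x ∂μ = 0 → ∃ x ∈ K, ε ≤ ‖f x - 1‖ := by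
  obtain ⟨Q, ε₀, hQ, hε₀, hT⟩ := hT
  refine ⟨Subtype.val '' Q ∪ {1}, min (ε₀ ^ 2 / 8) (1 / 2), ?_,
    (hQ.image continuous_subtype_val).union isCompact_singleton, by positivity, ?_⟩
  · rintro _ (⟨g, -, rfl⟩ | rfl)
    exacts [g.2, G.one_mem]
  rintro f ⟨ρ, v, hf⟩ hf₀
  obtain ⟨σ, w, hσw, hcyc⟩ := exists_cyclic_model ρ v
  simp_rw [hf, ← hσw] at hf₀ ⊢
  by_contra! hnear
  have hε₁ : min (ε₀ ^ 2 / 8) (1 / 2) ≤ 1 / 2 := min_le_right _ _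
  have hw1 : ‖⟪w, w⟫ - 1‖ < min (ε₀ ^ 2 / 8) (1 / 2) := by
    simpa [π_one_apply] using hnear 1 (Or.inr rfl)
  have hw : w ≠ 0 := by
    rintro rfl
    have := hw1.trans_le hε₁
    norm_num at this
  have hinv : ∀ u, (∀ x, σ.π x u = u) → u = 0 := fun u hu => hcyc u fun x => by
    rw [σ.inner_π_right_of_invariant hu, σ.inner_eq_zero_of_integral_inner_π_eq_zero μ w hf₀ hu]
  have hQw : ∀ g ∈ Q, ‖(σ.restrict G).π g w - w‖ < ε₀ * ‖w‖ := fun g hg => by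
    refine lt_of_pow_lt_pow_left₀ 2 (by positivity) ?_
    calc ‖σ.π g w - w‖ ^ 2 < 8 * min (ε₀ ^ 2 / 8) (1 / 2) * ‖w‖ ^ 2 :=
          norm_sub_sq_lt_of_inner_near_one (σ.π g) hε₁ hw1 (hnear g (Or.inl ⟨g, hg, rfl⟩))
      _ ≤ (ε₀ * ‖w‖) ^ 2 := by
          rw [mul_pow]
          gcongr
          linarith [min_le_left (ε₀ ^ 2 / 8) (1 / 2)]
  obtain ⟨y, hy0, hy⟩ := hT _ ((σ.restrict G).exists_unit_almost_invariant hw hQw)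
  exact hy0 (hinv y (σ.invariant_of_restrict_invariant hG hy))

theorem hasPropertyT_of_exists_far_from_one (hG : Dense (G : Set H)) {K : Set H} {ε : ℝ}
    (hKG : K ⊆ (G : Set H)) (hK : IsCompact K) (hε : 0 < ε)
    (hfar : ∀ f : H → ℂ, IsPositiveType.{uH, uF} f → ∫ x, f x ∂μ = 0 →
      ∃ x ∈ K, ε ≤ ‖f x - 1‖) :
    HasPropertyT.{uH, uE} G := by
  refine ⟨Subtype.val ⁻¹' K, ε,
    Topology.IsInducing.subtypeVal.isCompact_preimage' hK (by rwa [Subtype.range_coe]), hε, ?_⟩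
  rintro ρ ⟨v, hv1, hvQ⟩
  set ρH := extendOfDense hG ρ
  by_cases hP : ρH.average μ v = 0
  · obtain ⟨σ, w, hσw, -⟩ := exists_cyclic_model ρH v
    obtain ⟨x, hxK, hx⟩ := hfar (fun x => ⟪ρH.π x v, v⟫) ⟨σ, w, fun x => (hσw x).symm⟩
      (by rw [integral_inner_π, hP, inner_zero_left])
    lift x to G using hKG hxK
    rw [extendOfDense_π_coe] at hx
    exact absurd (hx.trans (norm_inner_sub_one_le _ hv1)) (hvQ x hxK).not_ge
  · exact ⟨_, hP, fun g => (extendOfDense_π_coe hG ρ g _).symm.trans (ρH.π_average μ v g)⟩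

end Criterion

theorem statement16_general {H : Type*} [TopologicalSpace H] [Group H] [IsTopologicalGroup H]
    [CompactSpace H] [MeasurableSpace H] [BorelSpace H]
    (μ : Measure H) [μ.IsHaarMeasure] [IsProbabilityMeasure μ]
    (G : Subgroup H) (hG : Dense (G : Set H)) :
    HasPropertyT ↥G ↔
      ∃ (K : Set H) (ε : ℝ), K ⊆ (G : Set H) ∧ IsCompact K ∧ 0 < ε ∧
        ∀ f : H → ℂ, IsPositiveType f → (∫ x, f x ∂μ) = 0 →
          ∃ x ∈ K, ε ≤ ‖f x - 1‖ :=
  ⟨exists_far_from_one_of_hasPropertyT μ hG, fun ⟨_, _, hKG, hK, hε, hfar⟩ =>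
    hasPropertyT_of_exists_far_from_one μ hG hKG hK hε hfar⟩

/-- A dense subgroup `G` of a compact Hausdorff group `H` (with normalized
Haar measure `μ`) has property (T) iff there are a compact `K ⊆ G` and `ε > 0` such
that every function of positive type on `H` with zero Haar integral is at distance
`≥ ε` from `1` somewhere on `K`. -/
theorem statement16 {H : Type*} [TopologicalSpace H] [Group H] [IsTopologicalGroup H]
    [T2Space H] [CompactSpace H] [MeasurableSpace H] [BorelSpace H]
    (μ : Measure H) [μ.IsHaarMeasure] [IsProbabilityMeasure μ]
    (G : Subgroup H) (hG : Dense (G : Set H)) :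
    HasPropertyT ↥G ↔
      ∃ (K : Set H) (ε : ℝ), K ⊆ (G : Set H) ∧ IsCompact K ∧ 0 < ε ∧
        ∀ f : H → ℂ, IsPositiveType f → (∫ x, f x ∂μ) = 0 →
          ∃ x ∈ K, ε ≤ ‖f x - 1‖ :=
  statement16_general μ G hG
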